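/- (Menshov–Trokhimchuk-type rigidity along the radical direction) Let Ω ⊆ E₃ be a domain convex in the direction of the line L = ℝ·l with l ∈ I, and let Φ : Ω → A₃ be continuous of the form Φ(ζ) = ρ²Φ₂(ζ) with Φ₂ : Ω → ℂ. Assume at every ζ ∈ Ω, except at most countably many, there exists Φ_*(ζ) ∈ A₃ such that lim_{δ→0⁺}(Φ(ζ+δh) − Φ(ζ))/δ = hΦ_*(ζ) holds for three vectors h₁, h₂, h₃ forming a basis of E₃ with h₃ = ±l. Then Φ₂ is constant on each intersection of Ω with a line parallel to L, i.e., Φ₂(ζ) = F₂(f(ζ)) for a continuous function F₂ on D = f(Ω). -/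

import Mathlib

noncomputable section

/-- The commutative algebra `A₃ = ℂ[ρ]/(ρ³)`, with basis `{1, ρ, ρ²}`;
an element `⟨a, b, c⟩` represents `a + b·ρ + c·ρ²`. -/
@[ext] structure A3 : Type where
  a : ℂ
  b : ℂ
  c : ℂ

namespace A3

instance : Zero A3 := ⟨⟨0, 0, 0⟩⟩
instance : One A3 := ⟨⟨1, 0, 0⟩⟩
instance : Add A3 := ⟨fun x y => ⟨x.a + y.a, x.b + y.b, x.c + y.c⟩⟩
instance : Neg A3 := ⟨fun x => ⟨-x.a, -x.b, -x.c⟩⟩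
instance : Mul A3 :=
  ⟨fun x y => ⟨x.a * y.a, x.a * y.b + x.b * y.a, x.a * y.c + x.b * y.b + x.c * y.a⟩⟩

@[simp] lemma zero_a : (0 : A3).a = 0 := rfl
@[simp] lemma zero_b : (0 : A3).b = 0 := rfl
@[simp] lemma zero_c : (0 : A3).c = 0 := rfl
@[simp] lemma one_a : (1 : A3).a = 1 := rfl
@[simp] lemma one_b : (1 : A3).b = 0 := rfl
@[simp] lemma one_c : (1 : A3).c = 0 := rfl
@[simp] lemma add_a (x y : A3) : (x + y).a = x.a + y.a := rfl
@[simp] lemma add_b (x y : A3) : (x + y).b = x.b + y.b := rfl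
@[simp] lemma add_c (x y : A3) : (x + y).c = x.c + y.c := rfl
@[simp] lemma neg_a (x : A3) : (-x).a = -x.a := rfl
@[simp] lemma neg_b (x : A3) : (-x).b = -x.b := rfl
@[simp] lemma neg_c (x : A3) : (-x).c = -x.c := rfl
@[simp] lemma mul_a (x y : A3) : (x * y).a = x.a * y.a := rfl
@[simp] lemma mul_b (x y : A3) : (x * y).b = x.a * y.b + x.b * y.a := rfl
@[simp] lemma mul_c (x y : A3) : (x * y).c = x.a * y.c + x.b * y.b + x.c * y.a := rfl

instance : CommRing A3 where
  add_assoc x y z := by ext <;> simp <;> ring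
  zero_add x := by ext <;> simp
  add_zero x := by ext <;> simp
  add_comm x y := by ext <;> simp <;> ring
  neg_add_cancel x := by ext <;> simp
  left_distrib x y z := by ext <;> simp <;> ring
  right_distrib x y z := by ext <;> simp <;> ring
  zero_mul x := by ext <;> simp
  mul_zero x := by ext <;> simp
  mul_assoc x y z := by ext <;> simp <;> ring
  one_mul x := by ext <;> simp
  mul_one x := by ext <;> simp
  mul_comm x y := by ext <;> simp <;> ring
  nsmul := fun n x => ⟨n • x.a, n • x.b, n • x.c⟩
  nsmul_zero x := by ext <;> exact AddMonoid.nsmul_zero _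
  nsmul_succ n x := by ext <;> exact AddMonoid.nsmul_succ _ _
  zsmul := fun n x => ⟨n • x.a, n • x.b, n • x.c⟩
  zsmul_zero' x := by ext <;> exact SubNegMonoid.zsmul_zero' _
  zsmul_succ' n x := by ext <;> exact SubNegMonoid.zsmul_succ' _ _
  zsmul_neg' n x := by ext <;> exact SubNegMonoid.zsmul_neg' _ _

/-- The canonical embedding `ℂ → A₃`. -/
def toA3 : ℂ →+* A3 where
  toFun r := ⟨r, 0, 0⟩
  map_one' := rfl
  map_mul' x y := by ext <;> simp
  map_zero' := rfl
  map_add' x y := by ext <;> simp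

instance : Algebra ℂ A3 := toA3.toAlgebra
instance : Algebra ℝ A3 := (toA3.comp (algebraMap ℝ ℂ)).toAlgebra

@[simp] lemma smulC_a (r : ℂ) (x : A3) : (r • x).a = r * x.a := by
  show (toA3 r * x).a = _ ; simp [toA3]
@[simp] lemma smulC_b (r : ℂ) (x : A3) : (r • x).b = r * x.b := by
  show (toA3 r * x).b = _ ; simp [toA3]
@[simp] lemma smulC_c (r : ℂ) (x : A3) : (r • x).c = r * x.c := by
  show (toA3 r * x).c = _ ; simp [toA3]
@[simp] lemma smulR_a (r : ℝ) (x : A3) : (r • x).a = (r : ℂ) * x.a := by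
  show ((toA3.comp (algebraMap ℝ ℂ)) r * x).a = _ ; simp [toA3]
@[simp] lemma smulR_b (r : ℝ) (x : A3) : (r • x).b = (r : ℂ) * x.b := by
  show ((toA3.comp (algebraMap ℝ ℂ)) r * x).b = _ ; simp [toA3]
@[simp] lemma smulR_c (r : ℝ) (x : A3) : (r • x).c = (r : ℂ) * x.c := by
  show ((toA3.comp (algebraMap ℝ ℂ)) r * x).c = _ ; simp [toA3]

/-- The nilpotent generator `ρ`. -/
def ρ : A3 := ⟨0, 1, 0⟩

lemma rho_sq : ρ ^ 2 = ⟨0, 0, 1⟩ := by ext <;> simp [ρ, sq]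
lemma rho_cubed : ρ ^ 3 = 0 := by ext <;> simp [ρ, pow_succ, sq]

/-- The element `a + b·ρ + c·ρ²` of `A₃`. -/
def el (a b c : ℂ) : A3 := algebraMap ℂ A3 a + b • ρ + c • ρ ^ 2

lemma el_def (a b c : ℂ) : el a b c = ⟨a, b, c⟩ := by
  simp only [el, rho_sq]; ext <;> simp [ρ] <;> simp [Algebra.algebraMap_eq_smul_one, toA3]

/-- The Euclidean norm `‖a + bρ + cρ²‖ = √(|a|² + |b|² + |c|²)`. -/
def nrm (x : A3) : ℝ :=
  Real.sqrt (‖x.a‖ ^ 2 + ‖x.b‖ ^ 2 + ‖x.c‖ ^ 2)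

/-- The topology of `A₃` (that of the Euclidean norm, i.e. of `ℂ³`). -/
instance : TopologicalSpace A3 :=
  TopologicalSpace.induced (fun x => (x.a, x.b, x.c)) inferInstance

/-- The functional `f(a + bρ + cρ²) = a`. -/
def fl (x : A3) : ℂ := x.a

/-- The set `I = {λ₁ρ + λ₂ρ² : λ₁, λ₂ ∈ ℂ}`. -/
def Iset : Set A3 := {x | ∃ l₁ l₂ : ℂ, x = l₁ • ρ + l₂ • ρ ^ 2}

/-- The kernel of `f`, i.e. the ideal `I`, as a real subspace of `A₃`. -/
def Iker : Submodule ℝ A3 where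
  carrier := {x | x.a = 0}
  add_mem' := by intro x y hx hy; simp_all [Set.mem_setOf_eq]
  zero_mem' := rfl
  smul_mem' := by intro r x hx; simp_all [Set.mem_setOf_eq]

/-- Componentwise contour integral over the circle `C(center, r)` of an `A₃`-valued function. -/
def cInt (g : ℂ → A3) (center : ℂ) (r : ℝ) : A3 :=
  ⟨∮ z in C(center, r), (g z).a, ∮ z in C(center, r), (g z).b, ∮ z in C(center, r), (g z).c⟩

end A3

/-!
At a point off `S` the difference quotients of `Φ = ρ²Φ₂` lie in `ℂρ²`, hence so does
`h Φ_*` for every admissible `h`. The vector `h₁` is not in `I` (otherwise `h₁ ∈ E₃ ∩ I = ℝl`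
would be a multiple of `h₃ = ±l`), so it is a unit and `Φ_* ∈ ℂρ²`; then `h₃ ∈ I` annihilates
`Φ_*`, i.e. the one-sided derivative of `Φ₂` in the direction `h₃` vanishes. By convexity in the
direction of `l`, every line section `t ↦ Φ₂ (ζ + t l)` between two points of `Ω` is continuous
on an interval and has a vanishing one-sided derivative off a countable set, so it is constant
(Trokhimchuk). Finally `Φ₂ = F₂ ∘ f`, and `F₂` is continuous because `f` has continuous affine
local sections with values in `Ω`.
-/

open Set Filter Topology

theorem countable_setOf_strictLocalMin {β : Type*} [Preorder β] (g : ℝ → β) :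
    {c | ∀ᶠ x in 𝓝[≠] c, g c < g x}.Countable := by
  have hrat : ∀ c ∈ {c | ∀ᶠ x in 𝓝[≠] c, g c < g x}, ∃ pq : ℚ × ℚ,
      c ∈ Ioo (pq.1 : ℝ) pq.2 ∧ ∀ x ∈ Ioo (pq.1 : ℝ) pq.2, x ≠ c → g c < g x := by
    intro c hc
    obtain ⟨ε, hε, hball⟩ := Metric.eventually_nhds_iff.1 (eventually_nhdsWithin_iff.1 hc)
    obtain ⟨p, hp⟩ := exists_rat_btwn (show c - ε < c by linarith)
    obtain ⟨q, hq⟩ := exists_rat_btwn (show c < c + ε by linarith)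
    refine ⟨(p, q), ⟨hp.2, hq.1⟩, fun x hx hxc => hball ?_ hxc⟩
    rw [Real.dist_eq, abs_lt]
    constructor <;> linarith [hx.1, hx.2]
  choose! pq hpq using hrat
  refine MapsTo.countable_of_injOn (mapsTo_univ pq _) (fun c hc c' hc' hcc' => ?_) countable_univ
  by_contra hne
  have h₁ := (hpq c hc).2 c' (hcc' ▸ (hpq c' hc').1) (Ne.symm hne)
  have h₂ := (hpq c' hc').2 c (hcc' ▸ (hpq c hc).1) hne
  exact lt_asymm h₁ h₂

theorem exists_mem_Ioo_eq_and_forall_Ioc_lt {g : ℝ → ℝ} {a b y : ℝ} (hab : a ≤ b)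
    (hg : ContinuousOn g (Icc a b)) (hay : g a < y) (hyb : y < g b) :
    ∃ c ∈ Ioo a b, g c = y ∧ ∀ x ∈ Ioc c b, y < g x := by
  set s := Icc a b ∩ g ⁻¹' Iic y
  have hs : IsClosed s := hg.preimage_isClosed_of_isClosed isClosed_Icc isClosed_Iic
  have hbdd : BddAbove s := ⟨b, fun x hx => hx.1.2⟩
  have hcs : sSup s ∈ s := hs.csSup_mem ⟨a, ⟨le_rfl, hab⟩, hay.le⟩ hbdd
  have habove : ∀ x ∈ Ioc (sSup s) b, y < g x := fun x hx => not_le.1 fun hxy =>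
    (le_csSup hbdd ⟨⟨hcs.1.1.trans hx.1.le, hx.2⟩, hxy⟩).not_gt hx.1
  have heq : g (sSup s) = y := by
    obtain ⟨x, hx, hgx⟩ := intermediate_value_Icc hcs.1.2 (hg.mono (Icc_subset_Icc_left hcs.1.1))
      ⟨hcs.2, hyb.le⟩
    rcases hx.1.eq_or_lt with hc | hc
    · rwa [hc]
    · exact absurd hgx (habove x ⟨hc, hx.2⟩).ne'
  refine ⟨sSup s, ⟨hcs.1.1.lt_of_ne ?_, hcs.1.2.lt_of_ne ?_⟩, heq, habove⟩
  · rintro hc; rw [← hc] at heq; exact hay.ne heq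
  · rintro hc; rw [hc] at heq; exact hyb.ne' heq

theorem HasDerivWithinAt.eventually_nhdsGT_lt {g : ℝ → ℝ} {g' c : ℝ}
    (h : HasDerivWithinAt g g' (Ici c) c) (hg' : g' < 0) : ∀ᶠ x in 𝓝[>] c, g x < g c := by
  rw [← hasDerivWithinAt_Ioi_iff_Ici, hasDerivWithinAt_iff_tendsto_slope' self_notMem_Ioi] at h
  filter_upwards [h.eventually (gt_mem_nhds hg'), self_mem_nhdsWithin] with x hx hcx
  exact (slope_neg_iff_of_le (le_of_lt hcx)).1 hx

theorem HasDerivWithinAt.eventually_nhdsLT_gt {g : ℝ → ℝ} {g' c : ℝ}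
    (h : HasDerivWithinAt g g' (Iic c) c) (hg' : g' < 0) : ∀ᶠ x in 𝓝[<] c, g c < g x := by
  rw [← hasDerivWithinAt_Iio_iff_Iic, hasDerivWithinAt_iff_tendsto_slope' self_notMem_Iio] at h
  filter_upwards [h.eventually (gt_mem_nhds hg'), self_mem_nhdsWithin] with x hx hxc
  rw [slope_comm] at hx
  exact (slope_neg_iff_of_le (le_of_lt hxc)).1 hx

/- Tilt `f` to `g = f - ε x` with `g a < g b`. For a level `y` between them, the last point `c`
where `g = y` has `g > y` on its right, so the right derivative of `f` cannot vanish there; if the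
left one does, `c` is a strict local minimum of `g`. Off countably many levels one of these cases
occurs, but strict local minima are countable too. -/
theorem le_of_hasDerivWithinAt_zero_off_countable {f : ℝ → ℝ} {a b : ℝ} {T : Set ℝ}
    (hab : a ≤ b) (hf : ContinuousOn f (Icc a b)) (hT : T.Countable)
    (hderiv : ∀ x ∈ Ioo a b \ T, HasDerivWithinAt f 0 (Ici x) x ∨ HasDerivWithinAt f 0 (Iic x) x) :
    f b ≤ f a := by
  by_contra! hlt
  have hab' : a < b := hab.lt_of_ne (by rintro rfl; exact lt_irrefl _ hlt)
  set ε := (f b - f a) / (2 * (b - a))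
  have hε : 0 < ε := div_pos (by linarith) (by linarith)
  set g : ℝ → ℝ := fun x => f x - ε * x
  have hg : ContinuousOn g (Icc a b) := hf.sub (continuousOn_const.mul continuousOn_id)
  have hgab : g a < g b := by
    have : ε * (b - a) = (f b - f a) / 2 := by simp only [ε]; field_simp [sub_ne_zero.2 hab'.ne']
    simp only [g]; linarith
  have hcover : Ioo (g a) (g b) ⊆ g '' (T ∪ {c | ∀ᶠ x in 𝓝[≠] c, g c < g x}) := by
    intro y hy
    obtain ⟨c, hc, rfl, hgt⟩ := exists_mem_Ioo_eq_and_forall_Ioc_lt hab hg hy.1 hy.2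
    refine ⟨c, ?_, rfl⟩
    by_cases hcT : c ∈ T
    · exact Or.inl hcT
    have hright : ∀ᶠ x in 𝓝[>] c, g c < g x :=
      eventually_of_mem (Ioc_mem_nhdsGT hc.2) hgt
    have hslope : ∀ s : Set ℝ, HasDerivWithinAt f 0 s c → HasDerivWithinAt g (0 - ε * 1) s c :=
      fun s hs => hs.sub ((hasDerivAt_id c).const_mul ε).hasDerivWithinAt
    rcases hderiv c ⟨hc, hcT⟩ with hR | hL
    · obtain ⟨x, hx₁, hx₂⟩ := (hright.and ((hslope _ hR).eventually_nhdsGT_lt (by linarith))).exists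
      exact absurd (hx₁.trans hx₂) (lt_irrefl _)
    · right
      rw [mem_ofPred_eq, ← nhdsLT_sup_nhdsGT, eventually_sup]
      exact ⟨(hslope _ hL).eventually_nhdsLT_gt (by linarith), hright⟩
  have := ((hT.union (countable_setOf_strictLocalMin g)).image g).mono hcover
  exact (Cardinal.Real.Ioo_countable_iff.1 this).not_gt hgab

theorem eq_of_hasDerivWithinAt_zero_off_countable {E : Type*} [NormedAddCommGroup E]
    [NormedSpace ℝ E] {f : ℝ → E} {a b : ℝ} {T : Set ℝ} (hf : ContinuousOn f (uIcc a b))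
    (hT : T.Countable)
    (hderiv : ∀ x ∈ uIoo a b \ T, HasDerivWithinAt f 0 (Ici x) x ∨ HasDerivWithinAt f 0 (Iic x) x) :
    f a = f b := by
  wlog hab : a ≤ b generalizing a b
  · exact (this (uIcc_comm a b ▸ hf) (uIoo_comm a b ▸ hderiv) (le_of_not_ge hab)).symm
  rw [uIcc_of_le hab] at hf
  rw [uIoo_of_le hab] at hderiv
  refine (SeparatingDual.eq_iff_forall_dual_eq (R := ℝ)).2 fun φ => ?_
  have hderivφ : ∀ x (s : Set ℝ), HasDerivWithinAt f 0 s x → HasDerivWithinAt (φ ∘ f) 0 s x :=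
    fun x s hs => by simpa using φ.hasFDerivAt.comp_hasDerivWithinAt x hs
  have hφf : ContinuousOn (φ ∘ f) (Icc a b) := φ.continuous.comp_continuousOn hf
  refine le_antisymm ?_ (le_of_hasDerivWithinAt_zero_off_countable hab hφf hT fun x hx =>
    (hderiv x hx).imp (hderivφ x _) (hderivφ x _))
  simpa using le_of_hasDerivWithinAt_zero_off_countable hab hφf.neg hT fun x hx =>
    (hderiv x hx).imp (fun h => by simpa using (hderivφ x _ h).neg)
      (fun h => by simpa using (hderivφ x _ h).neg)

section LineSlope

variable {V E : Type*} [AddCommGroup V] [Module ℝ V] [NormedAddCommGroup E] [NormedSpace ℝ E]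
  {Ψ : V → E} {ζ v : V} {x : ℝ}

theorem hasDerivWithinAt_Ici_of_tendsto_slope
    (h : Tendsto (fun δ : ℝ => δ⁻¹ • (Ψ (ζ + x • v + δ • v) - Ψ (ζ + x • v))) (𝓝[>] 0) (𝓝 0)) :
    HasDerivWithinAt (fun t : ℝ => Ψ (ζ + t • v)) 0 (Ici x) x := by
  rw [← hasDerivWithinAt_Ioi_iff_Ici, hasDerivWithinAt_iff_tendsto_slope' self_notMem_Ioi]
  have : 𝓝[>] x = map (x + ·) (𝓝[>] 0) := by simp
  rw [this, tendsto_map'_iff]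
  refine h.congr fun δ => ?_
  simp [slope_def_module, add_smul, add_assoc]

theorem hasDerivWithinAt_Iic_of_tendsto_slope
    (h : Tendsto (fun δ : ℝ => δ⁻¹ • (Ψ (ζ + x • v + δ • -v) - Ψ (ζ + x • v))) (𝓝[>] 0) (𝓝 0)) :
    HasDerivWithinAt (fun t : ℝ => Ψ (ζ + t • v)) 0 (Iic x) x := by
  rw [← hasDerivWithinAt_Iio_iff_Iic, hasDerivWithinAt_iff_tendsto_slope' self_notMem_Iio]
  have : 𝓝[<] x = map (x - ·) (𝓝[>] 0) := by simp
  rw [this, tendsto_map'_iff]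
  refine (neg_zero (G := E) ▸ h.neg).congr fun δ => ?_
  simp only [Function.comp_apply, slope_def_module, sub_sub_cancel_left, inv_neg, neg_smul,
    smul_neg, sub_smul, add_sub_assoc, ← sub_eq_add_neg]

end LineSlope

theorem eq_on_line_of_tendsto_slope_zero_off_countable {V E : Type*} [AddCommGroup V] [Module ℝ V]
    [TopologicalSpace V] [ContinuousAdd V] [ContinuousSMul ℝ V]
    [NormedAddCommGroup E] [NormedSpace ℝ E] {Ω S : Set V} {Ψ : V → E} {l : V} (hl : l ≠ 0)
    (hconv : ∀ ζ₁ ∈ Ω, ∀ ζ₂ ∈ Ω, (∃ c : ℝ, ζ₂ = ζ₁ + c • l) → segment ℝ ζ₁ ζ₂ ⊆ Ω)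
    (hΨ : ContinuousOn Ψ Ω) (hS : S.Countable)
    (hslope : ∀ ζ ∈ Ω \ S, ∃ v, (v = l ∨ v = -l) ∧
      Tendsto (fun δ : ℝ => δ⁻¹ • (Ψ (ζ + δ • v) - Ψ ζ)) (𝓝[>] 0) (𝓝 0))
    {ζ : V} (hζ : ζ ∈ Ω) {c : ℝ} (hc : ζ + c • l ∈ Ω) : Ψ ζ = Ψ (ζ + c • l) := by
  have hline : ∀ t ∈ uIcc 0 c, ζ + t • l ∈ Ω := by
    intro t ht
    refine hconv ζ hζ _ hc ⟨c, rfl⟩ ?_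
    have h := mem_image_of_mem (AffineMap.lineMap ζ (ζ + l) : ℝ → V)
      ((segment_eq_uIcc 0 c).symm ▸ ht)
    rw [image_segment] at h
    simpa [AffineMap.lineMap_apply, add_comm] using h
  have hT : {t : ℝ | ζ + t • l ∈ S}.Countable :=
    hS.preimage ((add_right_injective ζ).comp (smul_left_injective ℝ hl))
  have hcont : ContinuousOn (fun t : ℝ => Ψ (ζ + t • l)) (uIcc 0 c) :=
    hΨ.comp (by fun_prop) hline
  simpa using eq_of_hasDerivWithinAt_zero_off_countable hcont hT fun x hx => by
    obtain ⟨v, rfl | rfl, hv⟩ := hslope (ζ + x • l) ⟨hline x (Ioo_subset_Icc_self hx.1), hx.2⟩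
    · exact Or.inl (hasDerivWithinAt_Ici_of_tendsto_slope hv)
    · exact Or.inr (hasDerivWithinAt_Iic_of_tendsto_slope hv)

theorem continuousOn_of_factorsThrough {X Y Z : Type*} [TopologicalSpace X] [TopologicalSpace Y]
    [TopologicalSpace Z] {p : X → Y} {Ω : Set X} {Ψ : X → Z} {F : Y → Z}
    (hF : ∀ ζ ∈ Ω, F (p ζ) = Ψ ζ) (hΨ : ContinuousOn Ψ Ω)
    (hsec : ∀ ζ ∈ Ω, ∃ σ : Y → X, ∃ V ∈ 𝓝 (p ζ), ContinuousOn σ V ∧ MapsTo σ V Ω ∧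
      ∀ z ∈ V, p (σ z) = z) :
    ContinuousOn F (p '' Ω) := by
  rintro _ ⟨ζ, hζ, rfl⟩
  obtain ⟨σ, V, hV, hσ, hσΩ, hpσ⟩ := hsec ζ hζ
  refine ((hΨ.comp hσ hσΩ).continuousAt hV).congr ?_ |>.continuousWithinAt
  filter_upwards [hV] with z hz
  rw [Function.comp_apply, ← hF _ (hσΩ hz), hpσ z hz]

theorem LinearIndependent.ne_smul_of_fin_three {R M : Type*} [Ring R] [Nontrivial R]
    [AddCommGroup M] [Module R M] {x y z : M} (hli : LinearIndependent R ![x, y, z]) (c : R) :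
    x ≠ c • z := by
  intro hx
  have := Fintype.linearIndependent_iff.1 hli ![1, 0, -c] (by simp [Fin.sum_univ_three, hx])
  simpa using this 0

namespace A3

@[simp] lemma sub_a (x y : A3) : (x - y).a = x.a - y.a := by simp [sub_eq_add_neg]
@[simp] lemma sub_b (x y : A3) : (x - y).b = x.b - y.b := by simp [sub_eq_add_neg]
@[simp] lemma sub_c (x y : A3) : (x - y).c = x.c - y.c := by simp [sub_eq_add_neg]

lemma tendsto_nhds_iff {α : Type*} {l : Filter α} {F : α → A3} {x : A3} :
    Tendsto F l (𝓝 x) ↔ Tendsto (fun t => (F t).a) l (𝓝 x.a) ∧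
      Tendsto (fun t => (F t).b) l (𝓝 x.b) ∧ Tendsto (fun t => (F t).c) l (𝓝 x.c) := by
  rw [nhds_induced, tendsto_comap_iff, nhds_prod_eq, tendsto_prod_iff', nhds_prod_eq,
    tendsto_prod_iff']
  rfl

lemma continuous_iff {X : Type*} [TopologicalSpace X] {F : X → A3} :
    Continuous F ↔ Continuous (fun t => (F t).a) ∧ Continuous (fun t => (F t).b) ∧
      Continuous (fun t => (F t).c) := by
  simp only [continuous_iff_continuousAt, ContinuousAt, tendsto_nhds_iff, forall_and]

@[fun_prop] lemma continuous_a : Continuous a := (continuous_iff.1 continuous_id).1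
@[fun_prop] lemma continuous_b : Continuous b := (continuous_iff.1 continuous_id).2.1
@[fun_prop] lemma continuous_c : Continuous c := (continuous_iff.1 continuous_id).2.2

instance : ContinuousAdd A3 :=
  ⟨continuous_iff.2 ⟨by simp only [add_a]; fun_prop, by simp only [add_b]; fun_prop,
    by simp only [add_c]; fun_prop⟩⟩

instance : ContinuousSMul ℝ A3 :=
  ⟨continuous_iff.2 ⟨by simp only [smulR_a]; fun_prop, by simp only [smulR_b]; fun_prop,
    by simp only [smulR_c]; fun_prop⟩⟩

lemma tendsto_smul_rho_sq_iff {α : Type*} {l : Filter α} [l.NeBot] {w : α → ℂ} {x : A3} :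
    Tendsto (fun t => w t • ρ ^ 2) l (𝓝 x) ↔ x.a = 0 ∧ x.b = 0 ∧ Tendsto w l (𝓝 x.c) := by
  simp [tendsto_nhds_iff, rho_sq, tendsto_const_nhds_iff, eq_comm]

/- `h` is a unit, so `h * x ∈ ℂρ²` forces `x ∈ ℂρ²`, which `k ∈ I` annihilates. -/
lemma mul_c_eq_zero_of_a_eq_zero {h k x : A3} (hh : h.a ≠ 0) (hk : k.a = 0) (ha : (h * x).a = 0)
    (hb : (h * x).b = 0) : (k * x).c = 0 := by
  simp only [mul_a, mul_b, mul_c] at ha hb ⊢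
  have hxa : x.a = 0 := (mul_eq_zero.1 ha).resolve_left hh
  have hxb : x.b = 0 := by simpa [hxa, hh] using hb
  simp [hk, hxa, hxb]

theorem tendsto_slope_eq_zero_of_a_eq_zero {Φ₂ : A3 → ℂ} {ζ Φs h₀ h₃ : A3} (h₀a : h₀.a ≠ 0)
    (h₃a : h₃.a = 0)
    (hlim : ∀ h ∈ ({h₀, h₃} : Set A3), Tendsto (fun δ : ℝ => δ⁻¹ • (Φ₂ (ζ + δ • h) • ρ ^ 2 -
      Φ₂ ζ • ρ ^ 2)) (𝓝[>] 0) (𝓝 (h * Φs))) :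
    Tendsto (fun δ : ℝ => δ⁻¹ • (Φ₂ (ζ + δ • h₃) - Φ₂ ζ)) (𝓝[>] 0) (𝓝 0) := by
  have hcomp : ∀ h ∈ ({h₀, h₃} : Set A3), (h * Φs).a = 0 ∧ (h * Φs).b = 0 ∧
      Tendsto (fun δ : ℝ => δ⁻¹ • (Φ₂ (ζ + δ • h) - Φ₂ ζ)) (𝓝[>] 0) (𝓝 (h * Φs).c) := by
    intro h hh
    refine tendsto_smul_rho_sq_iff.1 ((hlim h hh).congr fun δ => ?_)
    rw [← sub_smul, smul_assoc]
  obtain ⟨ha, hb, -⟩ := hcomp h₀ (by simp)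
  simpa [mul_c_eq_zero_of_a_eq_zero h₀a h₃a ha hb] using (hcomp h₃ (by simp)).2.2

theorem exists_localSection_fl {E₃ : Submodule ℝ A3} (hsurj : ∀ w : ℂ, ∃ ζ ∈ E₃, fl ζ = w)
    {Ω : Set A3} (hΩE : Ω ⊆ E₃) (hopen : IsOpen {x : E₃ | (x : A3) ∈ Ω}) {ζ₀ : A3}
    (hζ₀ : ζ₀ ∈ Ω) : ∃ σ : ℂ → A3, ∃ V ∈ 𝓝 (fl ζ₀), ContinuousOn σ V ∧ MapsTo σ V Ω ∧
      ∀ z ∈ V, fl (σ z) = z := by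
  obtain ⟨e₁, he₁, he₁fl⟩ := hsurj 1
  obtain ⟨eI, heI, heIfl⟩ := hsurj Complex.I
  set σ : ℂ → E₃ := fun z => ⟨ζ₀ + (z - fl ζ₀).re • e₁ + (z - fl ζ₀).im • eI,
    E₃.add_mem (E₃.add_mem (hΩE hζ₀) (E₃.smul_mem _ he₁)) (E₃.smul_mem _ heI)⟩
  have hσ : Continuous σ := by
    refine Continuous.subtype_mk ?_ _
    fun_prop
  have hσζ₀ : σ (fl ζ₀) = ⟨ζ₀, hΩE hζ₀⟩ := by simp [σ]
  refine ⟨fun z => σ z, σ ⁻¹' {x | (x : A3) ∈ Ω}, hopen.preimage hσ |>.mem_nhds ?_,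
    (continuous_subtype_val.comp hσ).continuousOn, fun z hz => hz, fun z _ => ?_⟩
  · simpa [hσζ₀] using hζ₀
  · simp only [fl] at he₁fl heIfl ⊢
    apply Complex.ext <;> simp [σ, fl, he₁fl, heIfl]

end A3

theorem stmt17_general (E₃ : Submodule ℝ A3)
    (hsurj : ∀ w : ℂ, ∃ ζ ∈ E₃, A3.fl ζ = w)
    (l : A3) (hlI : A3.fl l = 0) (hl0 : l ≠ 0)
    (hlspan : ∀ x ∈ E₃, A3.fl x = 0 → ∃ c : ℝ, x = c • l)
    (Ω : Set A3) (hΩE : Ω ⊆ (E₃ : Set A3)) (hopen : IsOpen {x : E₃ | (x : A3) ∈ Ω})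
    (hconv : ∀ ζ₁ ∈ Ω, ∀ ζ₂ ∈ Ω, (∃ c : ℝ, ζ₂ = ζ₁ + c • l) → segment ℝ ζ₁ ζ₂ ⊆ Ω)
    (Φ₂ : A3 → ℂ) (hcont : ContinuousOn Φ₂ Ω)
    (Φ : A3 → A3) (hΦ : ∀ ζ, Φ ζ = Φ₂ ζ • A3.ρ ^ 2)
    (S : Set A3) (hS : S.Countable)
    (hK : ∀ ζ ∈ Ω \ S, ∃ Φs : A3, ∃ h₁ h₂ h₃ : A3,
      h₁ ∈ E₃ ∧ h₂ ∈ E₃ ∧ LinearIndependent ℝ ![h₁, h₂, h₃] ∧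
      (h₃ = l ∨ h₃ = -l) ∧
      ∀ h ∈ ({h₁, h₂, h₃} : Set A3),
        Filter.Tendsto (fun δ : ℝ => δ⁻¹ • (Φ (ζ + δ • h) - Φ ζ))
          (nhdsWithin 0 (Set.Ioi 0)) (nhds (h * Φs))) :
    (∀ ζ₁ ∈ Ω, ∀ ζ₂ ∈ Ω, A3.fl ζ₁ = A3.fl ζ₂ → Φ₂ ζ₁ = Φ₂ ζ₂) ∧
    ∃ F₂ : ℂ → ℂ, ContinuousOn F₂ (A3.fl '' Ω) ∧ ∀ ζ ∈ Ω, Φ₂ ζ = F₂ (A3.fl ζ) := by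
  have hslope : ∀ ζ ∈ Ω \ S, ∃ v, (v = l ∨ v = -l) ∧
      Tendsto (fun δ : ℝ => δ⁻¹ • (Φ₂ (ζ + δ • v) - Φ₂ ζ)) (𝓝[>] 0) (𝓝 0) := by
    intro ζ hζ
    obtain ⟨Φs, h₁, h₂, h₃, h₁E, -, hli, hsgn, hlim⟩ := hK ζ hζ
    have h₁a : h₁.a ≠ 0 := fun h => by
      obtain ⟨c, rfl⟩ := hlspan h₁ h₁E h
      rcases hsgn with rfl | rfl
      exacts [hli.ne_smul_of_fin_three c rfl, hli.ne_smul_of_fin_three (-c) (neg_smul_neg c l).symm]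
    have h₃a : h₃.a = 0 := by rcases hsgn with rfl | rfl <;> simpa [A3.fl] using hlI
    refine ⟨h₃, hsgn, A3.tendsto_slope_eq_zero_of_a_eq_zero (Φs := Φs) h₁a h₃a fun h hh => ?_⟩
    simpa only [hΦ] using hlim h (by rcases hh with rfl | rfl <;> simp)
  have hfiber : ∀ ζ₁ ∈ Ω, ∀ ζ₂ ∈ Ω, A3.fl ζ₁ = A3.fl ζ₂ → Φ₂ ζ₁ = Φ₂ ζ₂ := by
    intro ζ₁ h₁ ζ₂ h₂ hfl
    have hfl₀ : A3.fl (ζ₂ - ζ₁) = 0 := by simpa [A3.fl, sub_eq_zero] using hfl.symm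
    obtain ⟨c, hc⟩ := hlspan (ζ₂ - ζ₁) (E₃.sub_mem (hΩE h₂) (hΩE h₁)) hfl₀
    rw [sub_eq_iff_eq_add'] at hc
    subst hc
    exact eq_on_line_of_tendsto_slope_zero_off_countable hl0 hconv hcont hS hslope h₁ h₂
  set F₂ := Function.extend (fun ζ : Ω => A3.fl ζ) (fun ζ => Φ₂ ζ) 0
  have hF₂ : ∀ ζ ∈ Ω, F₂ (A3.fl ζ) = Φ₂ ζ := fun ζ hζ =>
    Function.FactorsThrough.extend_apply (fun (ζ₁ ζ₂ : Ω) h => hfiber _ ζ₁.2 _ ζ₂.2 h) 0 ⟨ζ, hζ⟩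
  refine ⟨hfiber, F₂, continuousOn_of_factorsThrough hF₂ hcont fun ζ hζ => ?_,
    fun ζ hζ => (hF₂ ζ hζ).symm⟩
  exact A3.exists_localSection_fl hsurj hΩE hopen hζ

/-- Menshov–Trokhimchuk-type rigidity along the radical direction:
if `Φ = ρ²Φ₂` is continuous on a domain `Ω ⊆ E₃` convex in the direction of `L = ℝ·l`
(`l` a direction vector of `E₃ ∩ I`) and satisfies the Menshov-type condition off a
countable set, then `Φ₂` is constant on line sections and `Φ₂ = F₂ ∘ f` for a
continuous `F₂` on `D = f(Ω)`. -/
theorem stmt17 (E₃ : Submodule ℝ A3) (hdim : Module.finrank ℝ E₃ = 3)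
    (hsurj : ∀ w : ℂ, ∃ ζ ∈ E₃, A3.fl ζ = w)
    (l : A3) (hlE : l ∈ E₃) (hlI : A3.fl l = 0) (hl0 : l ≠ 0)
    (hlspan : ∀ x ∈ E₃, A3.fl x = 0 → ∃ c : ℝ, x = c • l)
    (Ω : Set A3) (hΩE : Ω ⊆ (E₃ : Set A3)) (hopen : IsOpen {x : E₃ | (x : A3) ∈ Ω})
    (hconn : IsPreconnected Ω)
    (hconv : ∀ ζ₁ ∈ Ω, ∀ ζ₂ ∈ Ω, (∃ c : ℝ, ζ₂ = ζ₁ + c • l) → segment ℝ ζ₁ ζ₂ ⊆ Ω)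
    (Φ₂ : A3 → ℂ) (hcont : ContinuousOn Φ₂ Ω)
    (Φ : A3 → A3) (hΦ : ∀ ζ, Φ ζ = Φ₂ ζ • A3.ρ ^ 2)
    (S : Set A3) (hS : S.Countable)
    (hK : ∀ ζ ∈ Ω \ S, ∃ Φs : A3, ∃ h₁ h₂ h₃ : A3,
      h₁ ∈ E₃ ∧ h₂ ∈ E₃ ∧ LinearIndependent ℝ ![h₁, h₂, h₃] ∧
      (h₃ = l ∨ h₃ = -l) ∧
      ∀ h ∈ ({h₁, h₂, h₃} : Set A3),
        Filter.Tendsto (fun δ : ℝ => δ⁻¹ • (Φ (ζ + δ • h) - Φ ζ))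
          (nhdsWithin 0 (Set.Ioi 0)) (nhds (h * Φs))) :
    (∀ ζ₁ ∈ Ω, ∀ ζ₂ ∈ Ω, A3.fl ζ₁ = A3.fl ζ₂ → Φ₂ ζ₁ = Φ₂ ζ₂) ∧
    ∃ F₂ : ℂ → ℂ, ContinuousOn F₂ (A3.fl '' Ω) ∧ ∀ ζ ∈ Ω, Φ₂ ζ = F₂ (A3.fl ζ) :=
  stmt17_general E₃ hsurj l hlI hl0 hlspan Ω hΩE hopen hconv Φ₂ hcont Φ hΦ S hS hK
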